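/- (i) The word η contains no fourth power: for every nonempty finite word w over A, the word wwww is not a factor of η. (ii) The index (critical exponent) of the subshift generated by η equals 4: for every ε > 0 there exist a nonempty factor w of η and a prefix v of w such that wwwv is a factor of η and 3 + |v|/|w| > 4 − ε. -/

import Mathlib

/-- The four-letter alphabet `A = {a, x, y, z}`. -/
inductive A : Type
  | a | x | y | z
  deriving DecidableEq, Repr

/-- The substitution `τ : a ↦ axa, x ↦ y, y ↦ z, z ↦ x`. -/
def tau : A → List A
  | A.a => [A.a, A.x, A.a]
  | A.x => [A.y]
  | A.y => [A.z]
  | A.z => [A.x]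

/-- The substitution `τ` extended to finite words by concatenation. -/
def tauW (w : List A) : List A := w.flatMap tau

/-- `pw n = τⁿ(a)`, a word of length `2^(n+1) - 1`. -/
def pw : ℕ → List A
  | 0 => [A.a]
  | n + 1 => tauW (pw n)

/-- The fixed point `η` of `τ`: the unique one-sided infinite word having every
`τⁿ(a)` as a prefix.  (Since `pw (n+1)` has length `2^(n+2) - 1 > n`, reading its
`n`-th letter is well defined and independent of the choice of a large enough iterate.) -/
def eta (n : ℕ) : A := (pw (n + 1)).getD n A.a

/-- `w` is a (finite) factor of `η`. -/
def IsFactorEta (w : List A) : Prop :=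
  ∃ i : ℕ, w = (List.range w.length).map (fun k => eta (i + k))

/-!
Write `η = a D₀ a D₁ a D₂ ⋯` (`D k` is `etaOdd k`). The equation `τ(η) = η` says exactly that
`D (2k) = x` and `D (2k+1) = rot (D k)`, where `rot` cycles `x → y → z → x`.

A factor `wwww` is a window of length `4L` with period `L = |w|`. As the `a`'s sit exactly at the
even positions, `L` is even, and the odd positions give a window of length `2L` and period `L/2`
in `D`. In `D` an even period halves again, since `rot` is injective; an odd period pairs each
position with an even one, forcing `x` on the whole window, so `D (2k+1) = D (2k+3) = x`, i.e.
`D k = D (k+1) = z`, impossible as one of `k`, `k+1` is even.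

For the index, `w = τⁿ(ax) = τⁿ(a) c` for a letter `c`, and `www τⁿ(a) = τⁿ(axaxaxa)` is a factor
since `axaxaxa = τ(aza)` is one; its exponent is `3 + (2ⁿ⁺¹ - 1)/2ⁿ⁺¹`.
-/

def rot : A → A
  | A.a => A.a
  | A.x => A.y
  | A.y => A.z
  | A.z => A.x

lemma rot_injective : Function.Injective rot := by
  intro c d h
  cases c <;> cases d <;> first | rfl | cases h

lemma rot_eq_x_iff {c : A} : rot c = A.x ↔ c = A.z := by
  cases c <;> simp [rot]

lemma tau_of_ne_a {c : A} (hc : c ≠ A.a) : tau c = [rot c] := by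
  cases c <;> simp_all [tau, rot]

def etaOdd (k : ℕ) : A := if k % 2 = 0 then A.x else rot (etaOdd (k / 2))
termination_by k
decreasing_by omega

lemma etaOdd_two_mul (k : ℕ) : etaOdd (2 * k) = A.x := by
  rw [etaOdd]; simp

lemma etaOdd_two_mul_add_one (k : ℕ) : etaOdd (2 * k + 1) = rot (etaOdd k) := by
  rw [etaOdd, if_neg (by omega)]
  congr 2
  omega

lemma etaOdd_ne_a (k : ℕ) : etaOdd k ≠ A.a := by
  induction k using etaOdd.induct with
  | case1 k hk => rw [etaOdd, if_pos hk]; simp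
  | case2 k hk ih => rw [etaOdd, if_neg hk]; cases h : etaOdd (k / 2) <;> simp_all [rot]

def etaModel (n : ℕ) : A := if n % 2 = 0 then A.a else etaOdd (n / 2)

lemma etaModel_two_mul (k : ℕ) : etaModel (2 * k) = A.a := by
  simp [etaModel]

lemma etaModel_two_mul_add_one (k : ℕ) : etaModel (2 * k + 1) = etaOdd k := by
  rw [etaModel, if_neg (by omega)]
  congr 1
  omega

lemma map_range_two_mul_add_three (k : ℕ) :
    (List.range (2 * k + 3)).map etaModel
      = (List.range (2 * k + 1)).map etaModel ++ [etaOdd k, A.a] := by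
  rw [show 2 * k + 3 = 2 * k + 1 + 1 + 1 by ring, List.range_succ, List.range_succ]
  simp [etaModel_two_mul_add_one, show 2 * k + 1 + 1 = 2 * (k + 1) by ring, etaModel_two_mul]

lemma tauW_append (u v : List A) : tauW (u ++ v) = tauW u ++ tauW v :=
  List.flatMap_append

lemma tauW_map_range (L : ℕ) :
    tauW ((List.range (2 * L + 1)).map etaModel)
      = (List.range (2 * (2 * L + 1) + 1)).map etaModel := by
  induction L with
  | zero =>
    rw [show 2 * (2 * 0 + 1) + 1 = 2 * 0 + 3 by rfl, map_range_two_mul_add_three, etaOdd_two_mul 0]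
    simp [tauW, tau, etaModel]
  | succ L ih =>
    rw [show 2 * (L + 1) + 1 = 2 * L + 3 by ring, map_range_two_mul_add_three, tauW_append, ih,
      show 2 * (2 * L + 3) + 1 = 2 * (2 * L + 2) + 3 by ring, map_range_two_mul_add_three,
      show 2 * (2 * L + 2) + 1 = 2 * (2 * L + 1) + 3 by ring, map_range_two_mul_add_three,
      show 2 * L + 2 = 2 * (L + 1) by ring, etaOdd_two_mul, etaOdd_two_mul_add_one]
    simp only [tauW, List.flatMap_cons, List.flatMap_nil, tau_of_ne_a (etaOdd_ne_a L),
      List.append_assoc]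
    rfl

lemma pw_eq_map_range (m : ℕ) : pw m = (List.range (2 ^ (m + 1) - 1)).map etaModel := by
  induction m with
  | zero => simp [pw, etaModel]
  | succ m ih =>
    have h : 2 ^ (m + 1) - 1 = 2 * (2 ^ m - 1) + 1 := by
      have := Nat.one_le_two_pow (n := m); rw [pow_succ]; omega
    have h' : 2 ^ (m + 1 + 1) - 1 = 2 * (2 * (2 ^ m - 1) + 1) + 1 := by
      have := Nat.one_le_two_pow (n := m); rw [pow_succ, pow_succ]; omega
    rw [pw, ih, h, tauW_map_range, h']

lemma length_pw (m : ℕ) : (pw m).length = 2 ^ (m + 1) - 1 := by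
  simp [pw_eq_map_range]

lemma length_pw_gt (n : ℕ) : n < (pw n).length := by
  have := Nat.lt_two_pow_self (n := n)
  rw [length_pw, pow_succ]; omega

lemma getElem_pw {m k : ℕ} (hk : k < (pw m).length) : (pw m)[k] = etaModel k := by
  simp [pw_eq_map_range]

lemma eta_eq_etaModel (n : ℕ) : eta n = etaModel n := by
  have hn : n < (pw (n + 1)).length := by have := length_pw_gt (n + 1); omega
  rw [eta, List.getD_eq_getElem _ _ hn, getElem_pw]

lemma isFactorEta_iff_getElem? {f : List A} :
    IsFactorEta f ↔ ∃ i, ∀ k < f.length, f[k]? = some (etaModel (i + k)) := by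
  refine exists_congr fun i => ⟨fun h k hk => ?_, fun h => List.ext_getElem? fun k => ?_⟩
  · rw [h]
    simp [hk, eta_eq_etaModel]
  · by_cases hk : k < f.length
    · simp [← h k hk, hk, eta_eq_etaModel]
    · simp [hk]

lemma getElem?_pw {m k : ℕ} (hk : k < (pw m).length) : (pw m)[k]? = some (etaModel k) := by
  rw [List.getElem?_eq_getElem hk, getElem_pw]

lemma isFactorEta_iff_isInfix_pw {f : List A} : IsFactorEta f ↔ ∃ m, f <:+: pw m := by
  simp only [isFactorEta_iff_getElem?, List.infix_iff_getElem?]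
  constructor
  · rintro ⟨i, hi⟩
    have hlen := length_pw_gt (i + f.length)
    refine ⟨i + f.length, i, by omega, fun k hk => ?_⟩
    rw [getElem?_pw (by omega), add_comm, ← hi k hk, List.getElem?_eq_getElem hk]
  · rintro ⟨m, i, hlen, hi⟩
    refine ⟨i, fun k hk => ?_⟩
    rw [List.getElem?_eq_getElem hk, ← hi k hk, getElem?_pw (by omega), add_comm]

lemma IsFactorEta.of_isInfix {f g : List A} (hg : IsFactorEta g) (hfg : f <:+: g) :
    IsFactorEta f := by
  obtain ⟨m, hm⟩ := isFactorEta_iff_isInfix_pw.mp hg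
  exact isFactorEta_iff_isInfix_pw.mpr ⟨m, hfg.trans hm⟩

lemma IsFactorEta.tauW_iterate {f : List A} (hf : IsFactorEta f) (n : ℕ) :
    IsFactorEta (tauW^[n] f) := by
  induction n with
  | zero => exact hf
  | succ n ih =>
    obtain ⟨m, hm⟩ := isFactorEta_iff_isInfix_pw.mp ih
    rw [Function.iterate_succ_apply']
    exact isFactorEta_iff_isInfix_pw.mpr ⟨m + 1, hm.flatMap tau⟩

/-- The factor `f n ⋯ f (n + ℓ - 1)` has period `p`. -/
def HasPeriodOn {α : Type*} (f : ℕ → α) (p n ℓ : ℕ) : Prop :=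
  ∀ i, n ≤ i → i + p < n + ℓ → f i = f (i + p)

namespace HasPeriodOn

variable {α β : Type*} {f : ℕ → α} {p n ℓ : ℕ}

lemma odd_half (h : HasPeriodOn f (2 * p) n (2 * ℓ)) :
    HasPeriodOn (fun k => f (2 * k + 1)) p (n / 2) ℓ := by
  intro k hk hkp
  have := h (2 * k + 1) (by omega) (by omega)
  rwa [show 2 * k + 1 + 2 * p = 2 * (k + p) + 1 by ring] at this

lemma of_comp {φ : β → α} (hφ : Function.Injective φ) {g : ℕ → β}
    (h : HasPeriodOn (φ ∘ g) p n ℓ) : HasPeriodOn g p n ℓ :=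
  fun i hi hip => hφ (h i hi hip)

lemma eq_of_odd {c : α} (heven : ∀ k, f (2 * k) = c) (hp : Odd p) (hℓ : 2 * p ≤ ℓ)
    (h : HasPeriodOn f p n ℓ) {i : ℕ} (hni : n ≤ i) (hin : i < n + ℓ) : f i = c := by
  obtain ⟨q, rfl⟩ := hp
  rcases Nat.even_or_odd' i with ⟨k, rfl | rfl⟩
  · exact heven k
  · by_cases hright : 2 * k + 1 + (2 * q + 1) < n + ℓ
    · rw [h _ hni hright, show 2 * k + 1 + (2 * q + 1) = 2 * (k + q + 1) by ring, heven]
    · rw [← heven (k - q), show 2 * k + 1 = 2 * (k - q) + (2 * q + 1) by omega]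
      exact (h _ (by omega) (by omega)).symm

end HasPeriodOn

lemma etaOdd_two_mul_add_three_ne_x {k : ℕ} (h : etaOdd (2 * k + 1) = A.x) :
    etaOdd (2 * k + 3) ≠ A.x := by
  rw [show 2 * k + 3 = 2 * (k + 1) + 1 by ring, etaOdd_two_mul_add_one, Ne, rot_eq_x_iff]
  rw [etaOdd_two_mul_add_one, rot_eq_x_iff] at h
  rcases Nat.even_or_odd' k with ⟨j, rfl | rfl⟩
  · simp [etaOdd_two_mul] at h
  · simp [show 2 * j + 1 + 1 = 2 * (j + 1) by ring, etaOdd_two_mul]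

lemma etaOdd_not_hasPeriodOn {m : ℕ} (hm : 0 < m) (n : ℕ) :
    ¬ HasPeriodOn etaOdd m n (4 * m) := by
  induction m using Nat.strong_induction_on generalizing n with
  | _ m ih =>
    intro h
    rcases Nat.even_or_odd' m with ⟨q, rfl | rfl⟩
    · have hhalf := (show HasPeriodOn etaOdd (2 * q) n (2 * (4 * q)) by
        rwa [show 2 * (4 * q) = 4 * (2 * q) by ring]).odd_half
      simp only [etaOdd_two_mul_add_one] at hhalf
      exact ih q (by omega) (by omega) (n / 2) (hhalf.of_comp rot_injective)
    · have hx : ∀ i, n ≤ i → i < n + 4 * (2 * q + 1) → etaOdd i = A.x :=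
        fun i => h.eq_of_odd etaOdd_two_mul (odd_two_mul_add_one q) (by omega)
      exact etaOdd_two_mul_add_three_ne_x (hx _ (by omega) (by omega))
        (hx (2 * (n / 2) + 3) (by omega) (by omega))

lemma etaModel_not_hasPeriodOn {L : ℕ} (hL : 0 < L) (n : ℕ) :
    ¬ HasPeriodOn etaModel L n (4 * L) := by
  intro h
  rcases Nat.even_or_odd' L with ⟨m, rfl | rfl⟩
  · have hhalf := (show HasPeriodOn etaModel (2 * m) n (2 * (4 * m)) by
      rwa [show 2 * (4 * m) = 4 * (2 * m) by ring]).odd_half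
    simp only [etaModel_two_mul_add_one] at hhalf
    exact etaOdd_not_hasPeriodOn (by omega) (n / 2) hhalf
  · have ha := h.eq_of_odd etaModel_two_mul (odd_two_mul_add_one m) (by omega)
      (i := 2 * (n / 2) + 1) (by omega) (by omega)
    exact etaOdd_ne_a _ (by rwa [etaModel_two_mul_add_one] at ha)

lemma IsFactorEta.hasPeriodOn_of_fourth_power {w : List A}
    (h : IsFactorEta (w ++ w ++ w ++ w)) :
    ∃ n, HasPeriodOn etaModel w.length n (4 * w.length) := by
  obtain ⟨n, hn⟩ := isFactorEta_iff_getElem?.mp h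
  have hlen : (w ++ w ++ w ++ w).length = 4 * w.length := by simp; ring
  refine ⟨n, fun i hi hiL => Option.some_inj.mp ?_⟩
  have hleft : (w ++ w ++ w ++ w)[i - n]? = (w ++ w ++ w)[i - n]? :=
    List.getElem?_append_left (by simp; omega)
  have hright : (w ++ (w ++ w ++ w))[i - n + w.length]? = (w ++ w ++ w)[i - n]? := by
    rw [List.getElem?_append_right (by omega), Nat.add_sub_cancel]
  rw [show i = n + (i - n) by omega, ← hn _ (by omega), hleft, ← hright, add_assoc,
    ← hn _ (by omega)]
  simp

lemma not_isFactorEta_fourth_power {w : List A} (hw : w ≠ []) :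
    ¬ IsFactorEta (w ++ w ++ w ++ w) := fun h => by
  obtain ⟨n, hn⟩ := h.hasPeriodOn_of_fourth_power
  exact etaModel_not_hasPeriodOn (List.length_pos_iff.mpr hw) n hn

lemma tauW_iterate_append (n : ℕ) (u v : List A) :
    tauW^[n] (u ++ v) = tauW^[n] u ++ tauW^[n] v := by
  induction n generalizing u v with
  | zero => rfl
  | succ n ih => simp only [Function.iterate_succ_apply, tauW_append, ih]

lemma tauW_iterate_singleton {c : A} (hc : c ≠ A.a) (n : ℕ) : tauW^[n] [c] = [rot^[n] c] := by
  induction n generalizing c with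
  | zero => rfl
  | succ n ih =>
    have hrot : rot c ≠ A.a := by cases c <;> simp_all [rot]
    rw [Function.iterate_succ_apply, Function.iterate_succ_apply, ← ih hrot]
    simp [tauW, tau_of_ne_a hc]

lemma pw_eq_tauW_iterate (n : ℕ) : pw n = tauW^[n] [A.a] := by
  induction n with
  | zero => rfl
  | succ n ih => rw [pw, ih, Function.iterate_succ_apply']

lemma isFactorEta_overlap (n : ℕ) :
    IsFactorEta ((pw n ++ [rot^[n] A.x]) ++ (pw n ++ [rot^[n] A.x]) ++
      (pw n ++ [rot^[n] A.x]) ++ pw n) := by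
  have hseed : IsFactorEta [A.a, A.x, A.a, A.x, A.a, A.x, A.a] :=
    isFactorEta_iff_isInfix_pw.mpr ⟨4, by decide⟩
  have := hseed.tauW_iterate n
  rw [show [A.a, A.x, A.a, A.x, A.a, A.x, A.a] = [A.a] ++ [A.x] ++ ([A.a] ++ [A.x]) ++
      ([A.a] ++ [A.x]) ++ [A.a] from rfl] at this
  simpa only [tauW_iterate_append, ← pw_eq_tauW_iterate,
    tauW_iterate_singleton (c := A.x) (by decide), List.append_assoc] using this

/-- **Fourth-power freeness and the index of the subshift.**
(i) `η` contains no fourth power `wwww` of a nonempty word `w`.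
(ii) The index (critical exponent) equals `4`: for every `ε > 0` there are a
nonempty factor `w` of `η` and a prefix `v` of `w` with `wwwv` a factor of `η`
and `3 + |v|/|w| > 4 - ε`. -/
theorem no_fourth_powers_and_index_four :
    (∀ w : List A, w ≠ [] → ¬ IsFactorEta (w ++ w ++ w ++ w)) ∧
    (∀ ε : ℝ, 0 < ε →
      ∃ w v : List A, w ≠ [] ∧ IsFactorEta w ∧ v <+: w ∧
        IsFactorEta (w ++ w ++ w ++ v) ∧
        4 - ε < 3 + (v.length : ℝ) / (w.length : ℝ)) := by
  refine ⟨fun w hw => not_isFactorEta_fourth_power hw, fun ε hε => ?_⟩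
  obtain ⟨n, hn⟩ := exists_nat_gt (1 / ε)
  set v := pw n
  set w := v ++ [rot^[n] A.x]
  have hfactor : IsFactorEta (w ++ w ++ w ++ v) := isFactorEta_overlap n
  refine ⟨w, v, by simp [w], hfactor.of_isInfix (by simp), List.prefix_append _ _, hfactor, ?_⟩
  have hL : 1 < (v.length : ℝ) * ε := by
    rw [← div_lt_iff₀ hε]
    exact hn.trans (by exact_mod_cast length_pw_gt n)
  have hL0 : (0 : ℝ) < v.length + 1 := by positivity
  rw [show w.length = v.length + 1 by simp [w], Nat.cast_succ, ← sub_lt_iff_lt_add',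
    lt_div_iff₀ hL0]
  nlinarith
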